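/- Let I be the Rota-Baxter ideal of Ш_ℤ(ℤ) of weight 1 generated by f = 2(a_1 + a_0). Then every element of I is of the form Σ_{i=1}^{n+1} 2 c_i (a_i + a_{i−1}) for some n ∈ ℕ and c_i ∈ ℤ; consequently −2 a_0 ∉ I and the initial ideal in(I) equals ⊕_{i ≥ 1} 2ℤ a_i. -/
import Mathlib


open Finsupp

/-- The basis element `a_m` of the free Rota-Baxter algebra `Ш_k(k)`. -/
noncomputable def aElt {k : Type*} [CommRing k] (m : ℕ) : ℕ →₀ k := Finsupp.single m 1

/-- The product `⋄` of weight `l` on `Ш_k(k)`, defined on basis elements by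
`a_m ⋄ a_n = Σ_{i=0}^{min(m,n)} C(m+n−i,m) C(m,i) l^i a_{m+n−i}` and extended bilinearly. -/
noncomputable def diamond {k : Type*} [CommRing k] (l : k) (f g : ℕ →₀ k) : ℕ →₀ k :=
  f.sum fun m cm => g.sum fun n cn =>
    ∑ i ∈ Finset.range (min m n + 1),
      Finsupp.single (m + n - i) (cm * cn * ((m + n - i).choose m : k) * ((m.choose i : k)) * l ^ i)

/-- The Rota-Baxter operator `P (a_m) = a_{m+1}` on `Ш_k(k)`. -/
noncomputable def RBop {k : Type*} [CommRing k] (f : ℕ →₀ k) : ℕ →₀ k :=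
  Finsupp.mapDomain (· + 1) f

/-- A Rota-Baxter ideal of `Ш_k(k)` of weight `l`: a `k`-submodule that is an ideal
for `⋄` and closed under `P`. -/
def IsRBIdeal {k : Type*} [CommRing k] (l : k) (I : Submodule k (ℕ →₀ k)) : Prop :=
  (∀ f g : ℕ →₀ k, g ∈ I → diamond l f g ∈ I) ∧ (∀ f ∈ I, RBop f ∈ I)

/-- The Rota-Baxter ideal of `Ш_k(k)` generated by a set `S`. -/
noncomputable def RBspan {k : Type*} [CommRing k] (l : k) (S : Set (ℕ →₀ k)) :
    Submodule k (ℕ →₀ k) :=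
  sInf {J : Submodule k (ℕ →₀ k) | IsRBIdeal l J ∧ S ⊆ J}

/-- The coefficient ideal `Ω_j(I)`: coefficients at `a_j` of elements of `I`
supported in degrees `≤ j`. -/
def Omega {k : Type*} [CommRing k] (I : Set (ℕ →₀ k)) (j : ℕ) : Set k :=
  {b | ∃ f ∈ I, (∀ i, j < i → f i = 0) ∧ f j = b}

/-- The set of initial terms of nonzero elements of `I`. -/
def initialSet {k : Type*} [CommRing k] (I : Set (ℕ →₀ k)) : Set (ℕ →₀ k) :=
  {g | ∃ f ∈ I, ∃ n : ℕ, (∀ i, n < i → f i = 0) ∧ f n ≠ 0 ∧ g = Finsupp.single n (f n)}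



set_option linter.unnecessarySeqFocus false


lemma keyT (k : ℕ) : ∀ r, r ≤ k → ∀ N, r ≤ N →
    ∑ i ∈ Finset.range (r+1), (-1:ℤ)^i * (r.choose i) * ((N-i).choose k)
      = ((N-r).choose (k-r)) := by
  intro r
  induction r with
  | zero => intro _ N _; simp
  | succ r ih =>
    intro hrk N hrN
    have hrk' : r ≤ k := by omega
    have hA : ∑ i ∈ Finset.range (r+1), (-1:ℤ)^i * (r.choose i) * (((N-1)-i).choose k)
        = (((N-1)-r).choose (k-r)) := ih hrk' (N-1) (by omega)
    have hT : ∑ i ∈ Finset.range (r+1), (-1:ℤ)^i * (r.choose i) * ((N-i).choose k)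
        = ((N-r).choose (k-r)) := ih hrk' N (by omega)
    rw [Finset.sum_range_succ'] at hT
    rw [Finset.sum_range_succ']
    have hterm : ∀ i ∈ Finset.range (r+1),
        (-1:ℤ)^(i+1) * ((r+1).choose (i+1)) * ((N-(i+1)).choose k)
        = -((-1:ℤ)^i * (r.choose i) * (((N-1)-i).choose k))
          + -((-1:ℤ)^i * (r.choose (i+1)) * (((N-1)-i).choose k)) := by
      intro i _
      rw [Nat.choose_succ_succ, show N - (i+1) = (N-1) - i by omega]
      push_cast
      ring
    rw [Finset.sum_congr rfl hterm, Finset.sum_add_distrib, Finset.sum_neg_distrib,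
      Finset.sum_neg_distrib, hA]
    -- B' : ∑ i ∈ range (r+1), (-1)^i * C(r,i+1) * C((N-1)-i, k)
    have hB : ∑ i ∈ Finset.range (r+1), (-1:ℤ)^i * (r.choose (i+1)) * (((N-1)-i).choose k)
        = ((N:ℕ).choose k : ℤ) - ((N-r).choose (k-r)) := by
      rw [Finset.sum_range_succ, Nat.choose_succ_self]
      have : ∀ i ∈ Finset.range r,
          (-1:ℤ)^i * (r.choose (i+1)) * (((N-1)-i).choose k)
          = -((-1:ℤ)^(i+1) * (r.choose (i+1)) * ((N-(i+1)).choose k)) := by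
        intro i _
        rw [show N - (i+1) = (N-1) - i by omega]
        push_cast; ring
      rw [Finset.sum_congr rfl this, Finset.sum_neg_distrib]
      simp only [pow_zero, Nat.choose_zero_right, Nat.cast_one, one_mul, Nat.sub_zero] at hT
      push_cast
      linarith
    rw [hB]
    have hpas : ((N-r).choose (k-r) : ℤ)
        = ((N-(r+1)).choose (k-(r+1)) : ℤ) + (((N-1)-r).choose (k-r) : ℤ) := by
      have h1 : N - r = (N-(r+1)) + 1 := by omega
      have h2 : k - r = (k-(r+1)) + 1 := by omega
      have h3 : (N-1) - r = N-(r+1) := by omega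
      rw [h1, h2, h3, Nat.choose_succ_succ]
      push_cast; ring
    rw [hpas]
    simp
    ring

lemma key (m n : ℕ) :
    ∑ i ∈ Finset.range (min m n + 1),
      (-1:ℤ)^i * (((m+n-i).choose m : ℕ) : ℤ) * ((m.choose i : ℕ) : ℤ) = 1 := by
  have hext : ∑ i ∈ Finset.range (min m n + 1),
      (-1:ℤ)^i * ((m+n-i).choose m) * (m.choose i)
      = ∑ i ∈ Finset.range (m + 1), (-1:ℤ)^i * ((m+n-i).choose m) * (m.choose i) := by
    apply Finset.sum_subset
    · intro x hx; simp at hx ⊢; omega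
    · intro x hx hx'
      simp only [Finset.mem_range] at hx hx'
      have hxn : n < x := by omega
      have : m + n - x < m := by omega
      rw [Nat.choose_eq_zero_of_lt this]
      simp
  rw [hext]
  have := keyT m m le_rfl (m+n) (by omega)
  have heq : ∀ i ∈ Finset.range (m+1),
      (-1:ℤ)^i * ((m+n-i).choose m) * (m.choose i)
      = (-1:ℤ)^i * (m.choose i) * ((m+n-i).choose m) := by intro i _; ring
  rw [Finset.sum_congr rfl heq, this]
  simp

noncomputable def phi : (ℕ →₀ ℤ) →ₗ[ℤ] ℤ :=
  Finsupp.linearCombination ℤ (fun i : ℕ => (-1:ℤ)^i)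

lemma phi_single (a : ℕ) (b : ℤ) : phi (Finsupp.single a b) = b * (-1)^a := by
  simp [phi, Finsupp.linearCombination_single]

lemma phi_eq_sum_range (g : ℕ →₀ ℤ) (n : ℕ) (h : ∀ i, n < i → g i = 0) :
    phi g = ∑ i ∈ Finset.range (n+1), g i * (-1)^i := by
  rw [phi, Finsupp.linearCombination_apply]
  apply Finsupp.sum_of_support_subset
  · intro x hx
    simp only [Finset.mem_range]
    by_contra hc
    exact (Finsupp.mem_support_iff.mp hx) (h x (by omega))
  · intro i _; simp

lemma phi_diamond (f g : ℕ →₀ ℤ) : phi (diamond 1 f g) = phi f * phi g := by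
  have hinner : ∀ m n : ℕ, ∀ cm cn : ℤ,
      phi (∑ i ∈ Finset.range (min m n + 1),
        Finsupp.single (m + n - i) (cm * cn * ((m + n - i).choose m : ℤ) * ((m.choose i : ℤ)) * (1:ℤ) ^ i))
      = (cm * (-1)^m) * (cn * (-1)^n) := by
    intro m n cm cn
    rw [map_sum]
    have hstep : ∀ i ∈ Finset.range (min m n + 1),
        phi (Finsupp.single (m + n - i) (cm * cn * ((m + n - i).choose m : ℤ) * ((m.choose i : ℤ)) * (1:ℤ) ^ i))
        = (cm * cn * (-1)^(m+n)) * ((-1:ℤ)^i * ((m+n-i).choose m : ℤ) * ((m.choose i : ℤ))) := by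
      intro i hi
      simp only [Finset.mem_range] at hi
      rw [phi_single]
      have hle : i ≤ m + n := by omega
      have hpow : ((-1:ℤ))^(m+n-i) = (-1)^(m+n) * (-1)^i := by
        calc ((-1:ℤ))^(m+n-i) = (-1)^(m+n-i) * ((-1:ℤ)^2)^i := by norm_num
          _ = (-1)^(m+n-i+2*i) := by rw [← pow_mul, ← pow_add]
          _ = (-1)^(m+n+i) := by congr 1; omega
          _ = (-1)^(m+n) * (-1)^i := by rw [pow_add]
      rw [hpow]
      ring
    rw [Finset.sum_congr rfl hstep, ← Finset.mul_sum, key]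
    rw [pow_add]
    ring
  rw [diamond]
  simp only [Finsupp.sum]
  rw [map_sum]
  have : ∀ m ∈ f.support,
      phi (∑ n ∈ g.support, ∑ i ∈ Finset.range (min m n + 1),
        Finsupp.single (m + n - i) (f m * g n * ((m + n - i).choose m : ℤ) * ((m.choose i : ℤ)) * (1:ℤ) ^ i))
      = (f m * (-1)^m) * ∑ n ∈ g.support, (g n * (-1)^n) := by
    intro m _
    rw [map_sum, Finset.mul_sum]
    exact Finset.sum_congr rfl fun n _ => hinner m n (f m) (g n)
  rw [Finset.sum_congr rfl this, ← Finset.sum_mul]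
  rw [phi, Finsupp.linearCombination_apply, Finsupp.linearCombination_apply]
  simp only [Finsupp.sum, smul_eq_mul]

lemma diamond_apply_dvd (l : ℤ) (f g : ℕ →₀ ℤ) (hg : ∀ i, 2 ∣ g i) (k : ℕ) :
    2 ∣ (diamond l f g) k := by
  rw [diamond]
  simp only [Finsupp.sum]
  rw [Finsupp.finset_sum_apply]
  apply Finset.dvd_sum
  intro m _
  rw [Finsupp.finset_sum_apply]
  apply Finset.dvd_sum
  intro n _
  rw [Finsupp.finset_sum_apply]
  apply Finset.dvd_sum
  intro i _
  rw [Finsupp.single_apply]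
  split
  · exact (((((hg n).mul_left (f m)).mul_right _).mul_right _).mul_right _)
  · exact dvd_zero 2

lemma diamond_apply_zero (l : ℤ) (f g : ℕ →₀ ℤ) (hg : g 0 = 0) : (diamond l f g) 0 = 0 := by
  rw [diamond]
  simp only [Finsupp.sum]
  rw [Finsupp.finset_sum_apply]
  apply Finset.sum_eq_zero
  intro m _
  rw [Finsupp.finset_sum_apply]
  apply Finset.sum_eq_zero
  intro n hn
  rw [Finsupp.finset_sum_apply]
  apply Finset.sum_eq_zero
  intro i hi
  simp only [Finset.mem_range] at hi
  have hn0 : n ≠ 0 := fun h => (Finsupp.mem_support_iff.mp hn) (h ▸ hg)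
  rw [Finsupp.single_apply, if_neg (by omega)]

lemma RBop_apply_zero (f : ℕ →₀ ℤ) : (RBop f) 0 = 0 :=
  Finsupp.mapDomain_notin_range f 0 (by simp)

lemma RBop_apply_succ (f : ℕ →₀ ℤ) (k : ℕ) : (RBop f) (k+1) = f k :=
  Finsupp.mapDomain_apply (fun a b h => by omega) f k

lemma RBop_apply_dvd (f : ℕ →₀ ℤ) (hf : ∀ i, 2 ∣ f i) (k : ℕ) : 2 ∣ (RBop f) k := by
  cases k with
  | zero => rw [RBop_apply_zero]; exact dvd_zero 2
  | succ k => rw [RBop_apply_succ]; exact hf k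

lemma phi_RBop (f : ℕ →₀ ℤ) : phi (RBop f) = -phi f := by
  rw [phi, RBop, Finsupp.linearCombination_mapDomain, Finsupp.linearCombination_apply,
    Finsupp.linearCombination_apply]
  simp only [Finsupp.sum, Function.comp, smul_eq_mul]
  rw [← Finset.sum_neg_distrib]
  apply Finset.sum_congr rfl
  intro i _
  rw [pow_succ]
  ring

/-- The submodule of elements with `phi = 0` and all even coefficients. -/
noncomputable def Kp : Submodule ℤ (ℕ →₀ ℤ) where
  carrier := {g | phi g = 0 ∧ ∀ i, 2 ∣ g i}
  add_mem' := by
    rintro a b ⟨ha1, ha2⟩ ⟨hb1, hb2⟩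
    refine ⟨by rw [map_add, ha1, hb1, add_zero], fun i => ?_⟩
    rw [Finsupp.add_apply]
    exact dvd_add (ha2 i) (hb2 i)
  zero_mem' := ⟨map_zero phi, fun i => by simp⟩
  smul_mem' := by
    rintro c a ⟨h1, h2⟩
    refine ⟨by rw [map_smul, h1, smul_zero], fun i => ?_⟩
    rw [Finsupp.smul_apply, smul_eq_mul]
    exact (h2 i).mul_left c

/-- The submodule of elements with zero constant term and all even coefficients. -/
noncomputable def K0 : Submodule ℤ (ℕ →₀ ℤ) where
  carrier := {g | g 0 = 0 ∧ ∀ i, 2 ∣ g i}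
  add_mem' := by
    rintro a b ⟨ha1, ha2⟩ ⟨hb1, hb2⟩
    refine ⟨by rw [Finsupp.add_apply, ha1, hb1, add_zero], fun i => ?_⟩
    rw [Finsupp.add_apply]
    exact dvd_add (ha2 i) (hb2 i)
  zero_mem' := ⟨rfl, fun i => by simp⟩
  smul_mem' := by
    rintro c a ⟨h1, h2⟩
    refine ⟨by rw [Finsupp.smul_apply, h1, smul_zero], fun i => ?_⟩
    rw [Finsupp.smul_apply, smul_eq_mul]
    exact (h2 i).mul_left c

lemma Kp_RB : IsRBIdeal (1:ℤ) Kp := by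
  constructor
  · rintro f g ⟨h1, h2⟩
    exact ⟨by rw [phi_diamond, h1, mul_zero], diamond_apply_dvd 1 f g h2⟩
  · rintro f ⟨h1, h2⟩
    exact ⟨by rw [phi_RBop, h1, neg_zero], RBop_apply_dvd f h2⟩

lemma K0_RB : IsRBIdeal (1:ℤ) K0 := by
  constructor
  · rintro f g ⟨h1, h2⟩
    exact ⟨diamond_apply_zero 1 f g h1, diamond_apply_dvd 1 f g h2⟩
  · rintro f ⟨h1, h2⟩
    exact ⟨RBop_apply_zero f, RBop_apply_dvd f h2⟩

lemma subset_RBspan {k : Type*} [CommRing k] (l : k) (S : Set (ℕ →₀ k)) :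
    S ⊆ (RBspan l S : Set (ℕ →₀ k)) := by
  intro x hx
  rw [SetLike.mem_coe, RBspan, Submodule.mem_sInf]
  exact fun J hJ => hJ.2 hx

lemma RBspan_le {k : Type*} [CommRing k] (l : k) (S : Set (ℕ →₀ k))
    (J : Submodule k (ℕ →₀ k)) (hJ : IsRBIdeal l J) (hS : S ⊆ J) : RBspan l S ≤ J :=
  sInf_le ⟨hJ, hS⟩

lemma RBspan_RB {k : Type*} [CommRing k] (l : k) (S : Set (ℕ →₀ k)) :
    IsRBIdeal l (RBspan l S) := by
  constructor
  · intro f g hg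
    rw [RBspan, Submodule.mem_sInf] at hg ⊢
    exact fun J hJ => hJ.1.1 f g (hg J hJ)
  · intro f hf
    rw [RBspan, Submodule.mem_sInf] at hf ⊢
    exact fun J hJ => hJ.1.2 f (hf J hJ)

lemma decomp (g : ℕ →₀ ℤ) (hg : g ∈ Kp) :
    ∃ (n : ℕ) (c : ℕ → ℤ),
      g = ∑ j ∈ Finset.range (n + 1), (2 * c j) • ((aElt (j + 1) : ℕ →₀ ℤ) + aElt j) := by
  obtain ⟨hphi, hdvd⟩ := hg
  set n := g.support.sup id with hn
  have hbound : ∀ k, n < k → g k = 0 := by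
    intro k hk
    by_contra hc
    have := Finset.le_sup (f := id) (Finsupp.mem_support_iff.mpr hc)
    simp only [id_eq] at this
    omega
  set d : ℕ → ℤ := fun j => (-1)^j * ∑ i ∈ Finset.range (j+1), g i * (-1)^i with hd
  have hd_dvd : ∀ j, 2 ∣ d j := by
    intro j
    exact ((Finset.dvd_sum fun i _ => (hdvd i).mul_right _).mul_left _)
  refine ⟨n, fun j => d j / 2, ?_⟩
  have h2c : ∀ j, 2 * (d j / 2) = d j := fun j => Int.mul_ediv_cancel' (hd_dvd j)
  have hd0 : d 0 = g 0 := by simp [hd]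
  have hrec : ∀ j, d (j+1) + d j = g (j+1) := by
    intro j
    have ht : ((-1:ℤ))^j * (-1)^j = 1 := by
      rw [← pow_add, ← two_mul, pow_mul]; norm_num
    simp only [hd]
    rw [Finset.sum_range_succ (n := j+1), pow_succ]
    linear_combination g (j+1) * ht
  have hdn : d n = 0 := by
    have := phi_eq_sum_range g n hbound
    rw [hphi] at this
    simp only [hd, ← this, mul_zero]
  ext k
  rw [Finsupp.finset_sum_apply]
  have hterm : ∀ j, (((2 * (d j / 2)) • ((aElt (j + 1) : ℕ →₀ ℤ) + aElt j) : ℕ →₀ ℤ)) k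
      = (if j + 1 = k then d j else 0) + (if j = k then d j else 0) := by
    intro j
    rw [Finsupp.smul_apply, Finsupp.add_apply, aElt, aElt, Finsupp.single_apply,
      Finsupp.single_apply, h2c]
    split <;> split <;> simp <;> omega
  rw [Finset.sum_congr rfl (fun j _ => hterm j), Finset.sum_add_distrib]
  have hS2 : ∑ j ∈ Finset.range (n+1), (if j = k then d j else 0)
      = if k ∈ Finset.range (n+1) then d k else 0 := Finset.sum_ite_eq' _ _ _
  have hS1 : ∑ j ∈ Finset.range (n+1), (if j + 1 = k then d j else 0)
      = if 1 ≤ k ∧ k - 1 ∈ Finset.range (n+1) then d (k-1) else 0 := by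
    cases k with
    | zero => simp
    | succ k' =>
      have : ∀ j, (j + 1 = k' + 1) = (j = k') := by intro j; simp
      simp only [this]
      rw [Finset.sum_ite_eq' _ _ _]
      simp
  rw [hS1, hS2]
  simp only [Finset.mem_range]
  by_cases hk0 : k = 0
  · subst hk0; simpa using hd0.symm
  by_cases hkn : k ≤ n
  · rw [if_pos (by omega), if_pos (by omega)]
    obtain ⟨k', rfl⟩ : ∃ k', k = k' + 1 := ⟨k - 1, by omega⟩
    simp only [Nat.add_sub_cancel]
    rw [← hrec k']
    ring
  by_cases hkn1 : k = n + 1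
  · subst hkn1
    rw [if_pos (by omega), if_neg (by omega)]
    simp only [Nat.add_sub_cancel]
    rw [hdn, hbound (n+1) (by omega)]
    simp
  · rw [if_neg (by omega), if_neg (by omega), hbound k (by omega)]
    simp

lemma f0_mem_Kp : (2 : ℤ) • ((aElt 1 : ℕ →₀ ℤ) + aElt 0) ∈ Kp := by
  constructor
  · rw [map_smul, map_add]
    simp [aElt, phi_single]
  · intro i
    rw [Finsupp.smul_apply, smul_eq_mul]
    exact Dvd.intro _ rfl

lemma f0_apply (i : ℕ) : (((2 : ℤ) • ((aElt 1 : ℕ →₀ ℤ) + aElt 0) : ℕ →₀ ℤ)) i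
    = if i = 1 then 2 else if i = 0 then 2 else 0 := by
  rw [Finsupp.smul_apply, Finsupp.add_apply, aElt, aElt, Finsupp.single_apply,
    Finsupp.single_apply]
  split
  · split <;> (try omega) <;> simp_all
  · split
    · simp_all
    · split <;> simp_all <;> omega


/-- Let `I` be the Rota-Baxter ideal of `Ш_ℤ(ℤ)` of weight `1` generated by
`f = 2(a_1 + a_0)`. Then every element of `I` has the form
`Σ_{i=1}^{n+1} 2 c_i (a_i + a_{i−1})`; consequently `−2 a_0 ∉ I`, and the initial ideal
`in(I)` equals `⊕_{i ≥ 1} 2ℤ a_i`. -/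
theorem example_weight_one :
    (∀ g ∈ RBspan (1 : ℤ) {(2 : ℤ) • ((aElt 1 : ℕ →₀ ℤ) + aElt 0)},
      ∃ (n : ℕ) (c : ℕ → ℤ),
        g = ∑ j ∈ Finset.range (n + 1),
              (2 * c j) • ((aElt (j + 1) : ℕ →₀ ℤ) + aElt j))
    ∧ (-2 : ℤ) • (aElt 0 : ℕ →₀ ℤ) ∉
        RBspan (1 : ℤ) {(2 : ℤ) • ((aElt 1 : ℕ →₀ ℤ) + aElt 0)}
    ∧ (∀ g : ℕ →₀ ℤ,
        g ∈ RBspan (1 : ℤ)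
            (initialSet ((RBspan (1 : ℤ)
              {(2 : ℤ) • ((aElt 1 : ℕ →₀ ℤ) + aElt 0)}) : Set (ℕ →₀ ℤ)))
        ↔ (g 0 = 0 ∧ ∀ i : ℕ, (2 : ℤ) ∣ g i)) := by
  set S : Set (ℕ →₀ ℤ) := {(2 : ℤ) • ((aElt 1 : ℕ →₀ ℤ) + aElt 0)} with hS
  have hSKp : S ⊆ (Kp : Set (ℕ →₀ ℤ)) := by
    rintro x hx
    rw [hS, Set.mem_singleton_iff] at hx
    subst hx
    exact f0_mem_Kp
  have hIKp : RBspan (1:ℤ) S ≤ Kp := RBspan_le _ _ _ Kp_RB hSKp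
  refine ⟨?_, ?_, ?_⟩
  · intro g hg
    exact decomp g (hIKp hg)
  · intro hmem
    have hKp : (-2 : ℤ) • (aElt 0 : ℕ →₀ ℤ) ∈ Kp := hIKp hmem
    have : phi ((-2 : ℤ) • (aElt 0 : ℕ →₀ ℤ)) = -2 := by
      rw [map_smul, aElt, phi_single]
      norm_num
    rw [hKp.1] at this
    norm_num at this
  · intro g
    constructor
    · -- forward: contained in K0
      intro hg
      have hinit : initialSet ((RBspan (1:ℤ) S : Submodule ℤ (ℕ →₀ ℤ)) : Set (ℕ →₀ ℤ))
          ⊆ (K0 : Set (ℕ →₀ ℤ)) := by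
        rintro x ⟨f, hfI, n, htop, hne, rfl⟩
        have hfKp : f ∈ Kp := hIKp hfI
        have hn0 : n ≠ 0 := by
          intro h
          subst h
          have := phi_eq_sum_range f 0 htop
          rw [hfKp.1] at this
          simp at this
          exact hne this.symm
        refine ⟨by rw [Finsupp.single_apply, if_neg hn0], fun i => ?_⟩
        rw [Finsupp.single_apply]
        split
        · exact hfKp.2 n
        · exact dvd_zero 2
      exact RBspan_le _ _ _ K0_RB hinit hg
    · -- backward
      rintro ⟨hg0, hdvd⟩
      set Jin := RBspan (1:ℤ)
        (initialSet ((RBspan (1:ℤ) S : Submodule ℤ (ℕ →₀ ℤ)) : Set (ℕ →₀ ℤ))) with hJin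
      have hsingle1 : Finsupp.single 1 (2:ℤ) ∈
          initialSet ((RBspan (1:ℤ) S : Submodule ℤ (ℕ →₀ ℤ)) : Set (ℕ →₀ ℤ)) := by
        refine ⟨(2 : ℤ) • ((aElt 1 : ℕ →₀ ℤ) + aElt 0),
          subset_RBspan _ _ (Set.mem_singleton _), 1, ?_, ?_, ?_⟩
        · intro i hi
          rw [f0_apply, if_neg (by omega), if_neg (by omega)]
        · rw [f0_apply]; norm_num
        · rw [f0_apply]; norm_num
      have hstep : ∀ m : ℕ, Finsupp.single (m+1) (2:ℤ) ∈ Jin := by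
        intro m
        induction m with
        | zero => exact subset_RBspan _ _ hsingle1
        | succ m ih =>
          have := (RBspan_RB (1:ℤ) _).2 _ ih
          rwa [RBop, Finsupp.mapDomain_single] at this
      have hrepr : g = ∑ k ∈ g.support, Finsupp.single k (g k) := by
        conv_lhs => rw [← Finsupp.sum_single g]
        rfl
      rw [hrepr]
      apply Submodule.sum_mem
      intro k hk
      have hk0 : k ≠ 0 := by
        intro h
        subst h
        exact (Finsupp.mem_support_iff.mp hk) hg0
      obtain ⟨k', rfl⟩ : ∃ k', k = k' + 1 := ⟨k - 1, by omega⟩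
      have hgk : Finsupp.single (k'+1) (g (k'+1)) = (g (k'+1) / 2) • Finsupp.single (k'+1) (2:ℤ) := by
        rw [Finsupp.smul_single, smul_eq_mul, Int.ediv_mul_cancel (hdvd (k'+1))]
      rw [hgk]
      exact Submodule.smul_mem _ _ (hstep k')
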